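/- arXiv:1910.06604 — 3 statements merged into one kernel-verified Lean document; each statement's English description precedes it below -/
import Mathlib

section
/- With r(h) as in the weighted Korobov norm, for each h ∈ 𝒜_d(M) the squared error of the approximated Fourier coefficient satisfies |f̂_h − f̂_h^a|² ≤ ‖f‖_d² · ∑_{ℓ ∈ ℤ^d \ {0}, ℓ·z ≡ 0 (mod n)} 1/r(h+ℓ). -/
/-!
Evaluating the Fourier series at the rank-1 lattice points `{k z / n}` and using that
`(1/n) ∑_k e^{2πi k m / n}` is `1` or `0` according as `n ∣ m`, the lattice-rule coefficient
`f̂ₕᵃ` is the sum of `f̂_{h+ℓ}` over the dual lattice `ℓ · z ≡ 0 (mod n)` (aliasing). Its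
`ℓ = 0` term is `f̂ₕ`, so `f̂ₕ − f̂ₕᵃ` is minus the sum over the nonzero dual lattice points,
which Cauchy–Schwarz with the weights `r(h+ℓ)` bounds.
-/

open Finset Complex
open scoped Real

theorem sum_Icc_pow_eq_ite {R : Type*} [CommRing R] [IsDomain R] [DecidableEq R] {ω : R} {n : ℕ}
    (hω : ω ^ n = 1) : ∑ k ∈ Icc 1 n, ω ^ k = if ω = 1 then (n : R) else 0 := by
  have hperiodic : ∑ k ∈ Icc 1 n, ω ^ k = ∑ k ∈ range n, ω ^ k := by
    have hshift := (sum_range_succ' (ω ^ ·) n).symm.trans (sum_range_succ (ω ^ ·) n)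
    rw [← Ico_add_one_right_eq_Icc, sum_Ico_eq_sum_range, add_tsub_cancel_right]
    simp only [add_comm 1, pow_zero, hω] at hshift ⊢
    exact add_right_cancel hshift
  rw [hperiodic]
  split_ifs with h1
  · simp [h1]
  · have := geom_sum_mul ω n
    rw [hω, sub_self, mul_eq_zero] at this
    exact this.resolve_right (sub_ne_zero.mpr h1)

theorem sum_Icc_exp_eq_ite {n : ℕ} (hn : n ≠ 0) (m : ℤ) :
    ∑ k ∈ Icc 1 n, exp (2 * π * I * k * m / n) = if m % n = 0 then (n : ℂ) else 0 := by
  have hζ := isPrimitiveRoot_exp n hn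
  have hterm : ∀ k : ℕ, exp (2 * π * I * k * m / n) = (exp (2 * π * I / n) ^ m) ^ k := by
    intro k
    rw [← zpow_natCast, ← zpow_mul, ← exp_int_mul]
    congr 1
    push_cast
    ring
  have hperiod : (exp (2 * π * I / n) ^ m) ^ n = 1 := by
    rw [← zpow_natCast, ← zpow_mul, mul_comm m, zpow_mul, zpow_natCast, hζ.pow_eq_one, one_zpow]
  simp_rw [hterm, sum_Icc_pow_eq_ite hperiod, hζ.zpow_eq_one_iff_dvd, Int.dvd_iff_emod_eq_zero]

section Lattice

variable {ι : Type*} [Fintype ι]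

theorem exp_two_pi_I_sum_mul_fract (m : ι → ℤ) (x : ι → ℝ) :
    exp (2 * π * I * ∑ j, (m j : ℂ) * ((Int.fract (x j) : ℝ) : ℂ)) =
      exp (2 * π * I * ∑ j, (m j : ℂ) * (x j : ℂ)) := by
  simp_rw [mul_sum, exp_sum]
  refine prod_congr rfl fun j _ => ?_
  have hshift : 2 * π * I * (m j * x j) =
      2 * π * I * (m j * Int.fract (x j)) + ((m j * ⌊x j⌋ : ℤ) : ℂ) * (2 * π * I) := by
    rw [← Int.self_sub_floor]
    push_cast
    ring
  rw [hshift, exp_add, exp_int_mul_two_pi_mul_I, mul_one]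

theorem exp_two_pi_I_sum_mul_fract_mul_div (n k : ℕ) (g z : ι → ℤ) :
    exp (2 * π * I * ∑ j, (g j : ℂ) * ((Int.fract ((k : ℝ) * z j / n) : ℝ) : ℂ)) =
      exp (2 * π * I * k * (∑ j, g j * z j : ℤ) / n) := by
  rw [exp_two_pi_I_sum_mul_fract]
  congr 1
  push_cast
  simp only [mul_sum, sum_div]
  exact sum_congr rfl fun j _ => by ring

noncomputable def latticeRuleCoeff (n : ℕ) (z : ι → ℤ) (f : (ι → ℝ) → ℂ) (h : ι → ℤ) : ℂ :=
  1 / n * ∑ k ∈ Icc 1 n,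
    f (fun j => Int.fract ((k : ℝ) * z j / n)) * exp (-(2 * π * I) * k * (∑ j, h j * z j : ℤ) / n)

theorem latticeRuleCoeff_eq_tsum_indicator {n : ℕ} (hn : n ≠ 0) (z : ι → ℤ) {c : (ι → ℤ) → ℂ}
    (hc : Summable fun g => ‖c g‖) {f : (ι → ℝ) → ℂ}
    (hf : ∀ x, f x = ∑' g : ι → ℤ, c g * exp (2 * π * I * ∑ j, (g j : ℂ) * (x j : ℂ)))
    (h : ι → ℤ) :
    latticeRuleCoeff n z f h =
      ∑' ℓ, {ℓ : ι → ℤ | (∑ j, ℓ j * z j) % n = 0}.indicator (fun ℓ => c (h + ℓ)) ℓ := by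
  have hf_shift : ∀ x, f x =
      ∑' ℓ : ι → ℤ, c (h + ℓ) * exp (2 * π * I * ∑ j, ((h + ℓ) j : ℂ) * (x j : ℂ)) := fun x =>
    (hf x).trans ((Equiv.addLeft h).tsum_eq _).symm
  have hphase : ∀ (k : ℕ) (ℓ : ι → ℤ),
      exp (2 * π * I * ∑ j, ((h + ℓ) j : ℂ) * ((Int.fract ((k : ℝ) * z j / n) : ℝ) : ℂ)) *
        exp (-(2 * π * I) * k * (∑ j, h j * z j : ℤ) / n) =
      exp (2 * π * I * k * (∑ j, ℓ j * z j : ℤ) / n) := by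
    intro k ℓ
    rw [exp_two_pi_I_sum_mul_fract_mul_div, ← exp_add]
    congr 1
    simp only [Pi.add_apply, add_mul, sum_add_distrib]
    push_cast
    ring
  have hsummable : ∀ k : ℕ, Summable fun ℓ : ι → ℤ =>
      c (h + ℓ) * exp (2 * π * I * k * (∑ j, ℓ j * z j : ℤ) / n) := by
    intro k
    refine (hc.comp_injective (add_right_injective h)).of_norm_bounded fun ℓ => ?_
    rw [norm_mul, show 2 * π * I * k * (∑ j, ℓ j * z j : ℤ) / n =
      ((2 * π * k * (∑ j, ℓ j * z j : ℤ) / n : ℝ) : ℂ) * I by push_cast; ring,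
      norm_exp_ofReal_mul_I, mul_one]
    rfl
  unfold latticeRuleCoeff
  simp_rw [hf_shift, ← tsum_mul_right, mul_assoc (c _), hphase]
  rw [← Summable.tsum_finsetSum fun k _ => hsummable k, ← tsum_mul_left]
  refine tsum_congr fun ℓ => ?_
  rw [← mul_sum, sum_Icc_exp_eq_ite hn]
  simp only [Set.indicator_apply, Set.mem_ofPred_eq]
  split_ifs
  · field_simp
  · simp

end Lattice

theorem tsum_indicator_eq_add_tsum_subtype {β α : Type*} [AddCommGroup α] [TopologicalSpace α]
    [IsTopologicalAddGroup α] [T2Space α] {p : β → Prop} {f : β → α}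
    (hf : Summable ({x | p x}.indicator f)) {b : β} (hb : p b) :
    ∑' x, {x | p x}.indicator f x = f b + ∑' x : {x // x ≠ b ∧ p x}, f x := by
  classical
  rw [hf.tsum_eq_add_tsum_ite b, Set.indicator_of_mem (s := {x | p x}) hb]
  refine congrArg (f b + ·) <|
    (tsum_congr fun x => ?_).trans (tsum_subtype {x | x ≠ b ∧ p x} f).symm
  by_cases hx : x = b <;> simp [Set.indicator_apply, hx]

theorem sq_tsum_le_tsum_mul_tsum_of_sq_le_mul {ι : Type*} {r f g : ι → ℝ} (hf : ∀ i, 0 ≤ f i)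
    (hg : ∀ i, 0 ≤ g i) (ht : ∀ i, r i ^ 2 ≤ f i * g i) (hfs : Summable f) (hgs : Summable g) :
    (∑' i, r i) ^ 2 ≤ (∑' i, f i) * ∑' i, g i := by
  have hrs : Summable r := by
    refine ((hfs.add hgs).div_const 2).of_norm_bounded fun i => ?_
    have := two_mul_le_add_of_sq_le_mul (hf i) (hg i) ((sq_abs (r i)).trans_le (ht i))
    rw [Real.norm_eq_abs]
    linarith
  refine le_of_tendsto' (hrs.hasSum.pow 2) fun s => ?_
  exact (sum_sq_le_sum_mul_sum_of_sq_le_mul s (fun i _ => hf i) (fun i _ => hg i)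
    fun i _ => ht i).trans (mul_le_mul (hfs.sum_le_tsum s fun i _ => hf i)
      (hgs.sum_le_tsum s fun i _ => hg i) (sum_nonneg fun i _ => hg i) (tsum_nonneg hf))

theorem coefficient_error_bound_general (d n : ℕ) (hn : n.Prime) (z : Fin d → ℤ)
    (α : ℝ)
    (γ : Finset (Fin d) → ℝ) (hγ : ∀ u, 0 < γ u)
    (r : (Fin d → ℤ) → ℝ)
    (hr : ∀ h, r h = (γ (Finset.univ.filter fun j => h j ≠ 0))⁻¹ *
        ∏ j ∈ Finset.univ.filter (fun j => h j ≠ 0), ((h j).natAbs : ℝ) ^ α)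
    (c : (Fin d → ℤ) → ℂ) (hc : Summable fun h => ‖c h‖)
    (hnorm : Summable fun h => ‖c h‖ ^ 2 * r h)
    (f : (Fin d → ℝ) → ℂ)
    (hf : ∀ x, f x = ∑' h : Fin d → ℤ,
      c h * Complex.exp (2 * (Real.pi : ℂ) * Complex.I * (∑ j, (h j : ℂ) * (x j : ℂ))))
    (fa : (Fin d → ℤ) → ℂ)
    (hfa : ∀ h, fa h = (1 / (n : ℂ)) * ∑ k ∈ Finset.Icc 1 n,
        f (fun j => Int.fract ((k : ℝ) * (z j : ℝ) / (n : ℝ))) *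
          Complex.exp (-(2 * (Real.pi : ℂ) * Complex.I) * (k : ℂ) *
            ((∑ j, h j * z j : ℤ) : ℂ) / (n : ℂ)))
    (h : Fin d → ℤ)
    (hrsum : Summable fun ℓ : {ℓ : Fin d → ℤ // ℓ ≠ 0 ∧ (∑ j, ℓ j * z j) % (n : ℤ) = 0} =>
        1 / r (h + ℓ.1)) :
    ‖c h - fa h‖ ^ 2
      ≤ (∑' h' : Fin d → ℤ, ‖c h'‖ ^ 2 * r h') *
        ∑' ℓ : {ℓ : Fin d → ℤ // ℓ ≠ 0 ∧ (∑ j, ℓ j * z j) % (n : ℤ) = 0},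
          1 / r (h + ℓ.1) := by
  set S := {ℓ : Fin d → ℤ // ℓ ≠ 0 ∧ (∑ j, ℓ j * z j) % (n : ℤ) = 0}
  have hr_pos : ∀ g, 0 < r g := fun g => by
    rw [hr g]
    exact mul_pos (inv_pos.mpr (hγ _)) (prod_pos fun j hj =>
      Real.rpow_pos_of_pos (by simpa using (mem_filter.mp hj).2) α)
  have hinj : Function.Injective fun ℓ : S => h + ℓ.1 :=
    (add_right_injective h).comp Subtype.val_injective
  have halias : c h - fa h = -∑' ℓ : S, c (h + ℓ.1) := by
    rw [show fa h = latticeRuleCoeff n z f h from hfa h,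
      latticeRuleCoeff_eq_tsum_indicator hn.ne_zero z hc hf h,
      tsum_indicator_eq_add_tsum_subtype (f := fun ℓ => c (h + ℓ))
        ((hc.of_norm.comp_injective (add_right_injective h)).indicator _) ?_, add_zero]
    · ring
    · simp
  calc ‖c h - fa h‖ ^ 2
      = ‖∑' ℓ : S, c (h + ℓ.1)‖ ^ 2 := by rw [halias, norm_neg]
    _ ≤ (∑' ℓ : S, ‖c (h + ℓ.1)‖) ^ 2 := by
        gcongr
        exact norm_tsum_le_tsum_norm (hc.comp_injective hinj)
    _ ≤ (∑' ℓ : S, ‖c (h + ℓ.1)‖ ^ 2 * r (h + ℓ.1)) * ∑' ℓ : S, 1 / r (h + ℓ.1) :=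
        sq_tsum_le_tsum_mul_tsum_of_sq_le_mul (fun ℓ => mul_nonneg (sq_nonneg _) (hr_pos _).le)
          (fun ℓ => (one_div_pos.mpr (hr_pos _)).le)
          (fun ℓ => by rw [mul_assoc, mul_one_div_cancel (hr_pos _).ne', mul_one])
          (hnorm.comp_injective hinj) hrsum
    _ ≤ _ := by
        gcongr
        · exact tsum_nonneg fun ℓ => (one_div_pos.mpr (hr_pos _)).le
        · exact (hnorm.comp_injective hinj).tsum_le_tsum_of_inj _ hinj
            (fun g _ => mul_nonneg (sq_nonneg _) (hr_pos g).le) (fun _ => le_rfl) hnorm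

/-- Cauchy–Schwarz bound on the aliasing error of one approximated Fourier
coefficient: for `h ∈ 𝒜_d(M)` (i.e. `r(h) ≤ M`),
`|f̂ₕ − f̂ₕᵃ|² ≤ ‖f‖_d² · ∑_{ℓ ≠ 0, ℓ·z ≡ 0 (mod n)} 1/r(h+ℓ)`. -/
theorem coefficient_error_bound (d n : ℕ) (hn : n.Prime) (z : Fin d → ℤ)
    (hz : ∀ j, 1 ≤ z j ∧ z j ≤ (n : ℤ) - 1)
    (α M : ℝ) (hα : 1 < α) (hM : 0 < M)
    (γ : Finset (Fin d) → ℝ) (hγ : ∀ u, 0 < γ u) (hγe : γ ∅ = 1)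
    (r : (Fin d → ℤ) → ℝ)
    (hr : ∀ h, r h = (γ (Finset.univ.filter fun j => h j ≠ 0))⁻¹ *
        ∏ j ∈ Finset.univ.filter (fun j => h j ≠ 0), ((h j).natAbs : ℝ) ^ α)
    (c : (Fin d → ℤ) → ℂ) (hc : Summable fun h => ‖c h‖)
    (hnorm : Summable fun h => ‖c h‖ ^ 2 * r h)
    (f : (Fin d → ℝ) → ℂ)
    (hf : ∀ x, f x = ∑' h : Fin d → ℤ,
      c h * Complex.exp (2 * (Real.pi : ℂ) * Complex.I * (∑ j, (h j : ℂ) * (x j : ℂ))))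
    (fa : (Fin d → ℤ) → ℂ)
    (hfa : ∀ h, fa h = (1 / (n : ℂ)) * ∑ k ∈ Finset.Icc 1 n,
        f (fun j => Int.fract ((k : ℝ) * (z j : ℝ) / (n : ℝ))) *
          Complex.exp (-(2 * (Real.pi : ℂ) * Complex.I) * (k : ℂ) *
            ((∑ j, h j * z j : ℤ) : ℂ) / (n : ℂ)))
    (h : Fin d → ℤ) (hhA : r h ≤ M)
    (hrsum : Summable fun ℓ : {ℓ : Fin d → ℤ // ℓ ≠ 0 ∧ (∑ j, ℓ j * z j) % (n : ℤ) = 0} =>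
        1 / r (h + ℓ.1)) :
    ‖c h - fa h‖ ^ 2
      ≤ (∑' h' : Fin d → ℤ, ‖c h'‖ ^ 2 * r h') *
        ∑' ℓ : {ℓ : Fin d → ℤ // ℓ ≠ 0 ∧ (∑ j, ℓ j * z j) % (n : ℤ) = 0},
          1 / r (h + ℓ.1) :=
  coefficient_error_bound_general d n hn z α γ hγ r hr c hc hnorm f hf fa hfa h hrsum
end

section
/- For every s ≥ 0, m > 0 and q > 1/α, the set B̃_s(m) = {h ∈ (ℤ \ {0})^s : ∏_{j=1}^s |h_j|^α ≤ m} satisfies |B̃_s(m)| ≤ [2ζ(αq)]^s m^q, where ζ is the Riemann zeta function. -/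
/-!
Rankin's trick: every `h` in the hyperbolic cross satisfies
`1 ≤ m ^ q * ∏ j, |h j| ^ (-α q)`, so its cardinality is at most `m ^ q` times the sum of
`∏ j, |h j| ^ (-α q)` over all of `(ℤ \ {0}) ^ s`. Since `α q > 1` that sum factorises into
`s` copies of `∑_{t ≠ 0} |t| ^ (-α q) = 2 ζ(α q)`.
-/

/-- The zeta function value `ζ(x) = ∑_{k ≥ 1} k^{-x}`. -/
noncomputable def zetaR (x : ℝ) : ℝ := ∑' k : ℕ, ((k : ℝ) + 1) ^ (-x)

open Finset

lemma hasSum_zetaR {x : ℝ} (hx : 1 < x) :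
    HasSum (fun k : ℕ => ((k : ℝ) + 1) ^ (-x)) (zetaR x) := by
  have hsum : Summable fun k : ℕ => ((k : ℝ) + 1) ^ (-x) := by
    exact_mod_cast (summable_nat_add_iff 1).mpr (Real.summable_nat_rpow.mpr (by linarith))
  exact hsum.hasSum

lemma hasSum_int_natAbs_rpow_neg {x : ℝ} (hx : 1 < x) :
    HasSum (fun t : ℤ => (t.natAbs : ℝ) ^ (-x)) (2 * zetaR x) := by
  -- the `t = 0` term is `0 ^ (-x) = 0`
  have hpos : HasSum (fun n : ℕ => (n : ℝ) ^ (-x)) (zetaR x) := by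
    refine (hasSum_nat_add_iff' 1).mp ?_
    simpa [Real.zero_rpow (by linarith : -x ≠ 0)] using hasSum_zetaR hx
  rw [two_mul]
  refine HasSum.of_nat_of_neg_add_one ?_ ?_
  · simpa using hpos
  · convert hasSum_zetaR hx using 3 with n
    rw [Int.natAbs_neg]
    norm_cast

lemma Set.finite_and_ncard_le_of_forall_finset_card_le {ι : Type*} {S : Set ι} {M : ℝ}
    (h : ∀ F : Finset ι, ↑F ⊆ S → (#F : ℝ) ≤ M) : S.Finite ∧ (S.ncard : ℝ) ≤ M := by
  have hfin : S.Finite := by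
    by_contra hinf
    obtain ⟨F, hFS, hF⟩ := Set.Infinite.exists_subset_card_eq hinf (⌊M⌋₊ + 1)
    have := h F hFS
    rw [hF, Nat.cast_add_one] at this
    exact (Nat.lt_floor_add_one M).not_ge this
  refine ⟨hfin, ?_⟩
  rw [Set.ncard_eq_toFinset_card S hfin]
  exact h _ (by simp)

lemma sum_prod_le_tsum_pow {ι κ : Type*} [Fintype κ] {g : ι → ℝ} (hg : 0 ≤ g)
    (hsum : Summable g) (F : Finset (κ → ι)) :
    ∑ h ∈ F, ∏ j, g (h j) ≤ (∑' t, g t) ^ Fintype.card κ := by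
  classical
  have hF : F ⊆ Fintype.piFinset fun j => F.image (· j) := fun h hh =>
    Fintype.mem_piFinset.mpr fun j => mem_image_of_mem _ hh
  calc ∑ h ∈ F, ∏ j, g (h j)
      ≤ ∑ h ∈ Fintype.piFinset (fun j => F.image (· j)), ∏ j, g (h j) :=
        sum_le_sum_of_subset_of_nonneg hF fun h _ _ => prod_nonneg fun j _ => hg _
    _ = ∏ j, ∑ t ∈ F.image (· j), g t := (prod_univ_sum _ _).symm
    _ ≤ ∏ _j : κ, ∑' t, g t :=
        prod_le_prod (fun j _ => sum_nonneg fun t _ => hg t)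
          fun j _ => hsum.sum_le_tsum _ fun t _ => hg t
    _ = (∑' t, g t) ^ Fintype.card κ := prod_const _

def hyperbolicCross (κ : Type*) [Fintype κ] (α m : ℝ) : Set (κ → ℤ) :=
  {h | (∀ j, h j ≠ 0) ∧ ∏ j, ((h j).natAbs : ℝ) ^ α ≤ m}

section
variable {κ : Type*} [Fintype κ] {α m q : ℝ}

lemma one_le_rpow_mul_prod_natAbs_rpow_neg (hq : 0 ≤ q) {h : κ → ℤ}
    (hh : h ∈ hyperbolicCross κ α m) :
    1 ≤ m ^ q * ∏ j, ((h j).natAbs : ℝ) ^ (-(α * q)) := by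
  obtain ⟨hne, hle⟩ := hh
  have hpos : ∀ j, (0 : ℝ) < (h j).natAbs := fun j => by simpa using hne j
  have hP : 0 < ∏ j, ((h j).natAbs : ℝ) ^ α :=
    prod_pos fun j _ => by have := hpos j; positivity
  have hprod : ∏ j, ((h j).natAbs : ℝ) ^ (-(α * q))
      = ((∏ j, ((h j).natAbs : ℝ) ^ α) ^ q)⁻¹ := by
    rw [← Real.finsetProd_rpow _ _ fun j _ => by have := hpos j; positivity, ← prod_inv_distrib]
    refine prod_congr rfl fun j _ => ?_
    rw [← Real.rpow_mul (hpos j).le, Real.rpow_neg (hpos j).le]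
  rw [hprod, ← div_eq_mul_inv, one_le_div (by positivity)]
  exact Real.rpow_le_rpow hP.le hle hq

lemma card_le_of_subset_hyperbolicCross (hm : 0 < m) (hq : 0 ≤ q) (hαq : 1 < α * q)
    {F : Finset (κ → ℤ)} (hF : ↑F ⊆ hyperbolicCross κ α m) :
    (#F : ℝ) ≤ (2 * zetaR (α * q)) ^ Fintype.card κ * m ^ q := by
  have hsum := hasSum_int_natAbs_rpow_neg hαq
  calc (#F : ℝ) = ∑ _h ∈ F, 1 := by simp
    _ ≤ ∑ h ∈ F, m ^ q * ∏ j, ((h j).natAbs : ℝ) ^ (-(α * q)) :=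
        sum_le_sum fun h hh => one_le_rpow_mul_prod_natAbs_rpow_neg hq (hF hh)
    _ = m ^ q * ∑ h ∈ F, ∏ j, ((h j).natAbs : ℝ) ^ (-(α * q)) := (mul_sum _ _ _).symm
    _ ≤ m ^ q * (2 * zetaR (α * q)) ^ Fintype.card κ := by
        gcongr
        rw [← hsum.tsum_eq]
        exact sum_prod_le_tsum_pow (fun t => by positivity) hsum.summable F
    _ = _ := mul_comm _ _

end

/-- Hyperbolic-cross counting bound: the set
`B̃_s(m) = {h ∈ (ℤ \ {0})^s : ∏_{j=1}^s |h_j|^α ≤ m}` is finite with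
`|B̃_s(m)| ≤ [2ζ(αq)]^s m^q` for all `m > 0` and `q > 1/α`. -/
theorem hyperbolic_cross_count (α : ℝ) (hα : 1 < α) (s : ℕ) (m q : ℝ)
    (hm : 0 < m) (hq : 1 / α < q) :
    {h : Fin s → ℤ | (∀ j, h j ≠ 0) ∧ ∏ j, ((h j).natAbs : ℝ) ^ α ≤ m}.Finite ∧
    (({h : Fin s → ℤ | (∀ j, h j ≠ 0) ∧ ∏ j, ((h j).natAbs : ℝ) ^ α ≤ m}.ncard : ℝ)
      ≤ (2 * zetaR (α * q)) ^ s * m ^ q) := by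
  have hα0 : 0 < α := by linarith
  have hq0 : 0 < q := (one_div_pos.mpr hα0).trans hq
  have hαq : 1 < α * q := by rwa [div_lt_iff₀ hα0, mul_comm] at hq
  have hbound := Set.finite_and_ncard_le_of_forall_finset_card_le fun F hF =>
    card_le_of_subset_hyperbolicCross (κ := Fin s) hm hq0.le hαq hF
  rwa [Fintype.card_fin] at hbound
end

section
/- For all d ≥ 1, M > 0 and q > 1/α, the cardinality of the index set 𝒜_d(M) = {h ∈ ℤ^d : r(h) ≤ M} satisfies |𝒜_d(M)| ≤ M^q ∑_{𝔲 ⊆ {1,...,d}} [2ζ(αq)]^{|𝔲|} γ_𝔲^q. -/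
open Finset

lemma Set.finite_of_forall_finset_card_le {β : Type*} {S : Set β} (n : ℕ)
    (h : ∀ T : Finset β, ↑T ⊆ S → T.card ≤ n) : S.Finite := by
  by_contra hS
  obtain ⟨T, hTS, hT⟩ := (Set.not_finite.mp hS).exists_subset_card_eq (n + 1)
  have := h T hTS
  omega

lemma one_le_rpow_mul_rpow_neg {x M q : ℝ} (hx : 0 < x) (hxM : x ≤ M) (hq : 0 ≤ q) :
    1 ≤ M ^ q * x ^ (-q) := by
  rw [Real.rpow_neg hx.le, ← div_eq_mul_inv, one_le_div (Real.rpow_pos_of_pos hx q)]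
  exact Real.rpow_le_rpow hx.le hxM hq

lemma card_le_rpow_mul_sum_rpow_neg {β : Type*} {ρ : β → ℝ} {M q : ℝ} (hq : 0 ≤ q)
    (T : Finset β) (hρ : ∀ x ∈ T, 0 < ρ x ∧ ρ x ≤ M) :
    (T.card : ℝ) ≤ M ^ q * ∑ x ∈ T, ρ x ^ (-q) := by
  rw [mul_sum, card_eq_sum_ones, Nat.cast_sum, Nat.cast_one]
  exact sum_le_sum fun x hx => one_le_rpow_mul_rpow_neg (hρ x hx).1 (hρ x hx).2 hq

lemma inv_mul_prod_rpow_rpow_neg {ι : Type*} (u : Finset ι) {g : ℝ} (hg : 0 ≤ g)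
    {a : ι → ℝ} (ha : ∀ j, 0 ≤ a j) (α q : ℝ) :
    (g⁻¹ * ∏ j ∈ u, a j ^ α) ^ (-q) = g ^ q * ∏ j ∈ u, a j ^ (-(α * q)) := by
  rw [Real.mul_rpow (inv_nonneg.2 hg) (prod_nonneg fun j _ => Real.rpow_nonneg (ha j) α),
    Real.inv_rpow hg, Real.rpow_neg hg, inv_inv,
    ← Real.finsetProd_rpow u _ (fun j _ => Real.rpow_nonneg (ha j) α)]
  simp_rw [← Real.rpow_mul (ha _), mul_neg]

lemma Finset.sum_prod_le_prod_tsum {ι κ : Type*} [Fintype ι] {f : ι → κ → ℝ}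
    (hf₀ : ∀ i k, 0 ≤ f i k) (hf : ∀ i, Summable (f i)) (T : Finset (ι → κ)) :
    ∑ x ∈ T, ∏ i, f i (x i) ≤ ∏ i, ∑' k, f i k := by
  classical
  calc ∑ x ∈ T, ∏ i, f i (x i)
      ≤ ∑ x ∈ Fintype.piFinset fun i => T.image (· i), ∏ i, f i (x i) :=
        sum_le_sum_of_subset_of_nonneg
          (fun x hx => Fintype.mem_piFinset.2 fun i => mem_image_of_mem _ hx)
          fun x _ _ => prod_nonneg fun i _ => hf₀ i _
    _ = ∏ i, ∑ k ∈ T.image (· i), f i k := (prod_univ_sum _ _).symm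
    _ ≤ ∏ i, ∑' k, f i k :=
        prod_le_prod (fun i _ => sum_nonneg fun k _ => hf₀ i k)
          fun i _ => (hf i).sum_le_tsum _ fun k _ => hf₀ i k

lemma Finset.sum_prod_le_tsum_pow {ι κ : Type*} [Zero κ] {f : κ → ℝ} (hf₀ : ∀ k, 0 ≤ f k)
    (hf : Summable f) (u : Finset ι) (T : Finset (ι → κ)) (hT : ∀ x ∈ T, ∀ i ∉ u, x i = 0) :
    ∑ x ∈ T, ∏ i ∈ u, f (x i) ≤ (∑' k, f k) ^ u.card := by
  classical
  have hinj : Set.InjOn (fun (x : ι → κ) (i : u) => x i) T := by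
    intro x hx y hy hxy
    funext i
    by_cases hi : i ∈ u
    · exact congrFun hxy ⟨i, hi⟩
    · rw [hT x hx i hi, hT y hy i hi]
  calc ∑ x ∈ T, ∏ i ∈ u, f (x i) = ∑ y ∈ T.image fun x (i : u) => x i, ∏ i, f (y i) := by
        rw [sum_image hinj]
        exact sum_congr rfl fun x _ => (prod_coe_sort u _).symm
    _ ≤ ∏ _i : u, ∑' k, f k := sum_prod_le_prod_tsum (fun _ => hf₀) (fun _ => hf) _
    _ = (∑' k, f k) ^ u.card := by rw [prod_const, card_univ, Fintype.card_coe]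

section ZetaSeries

variable {s : ℝ}

lemma summable_zetaR_terms (hs : 1 < s) : Summable fun k : ℕ => ((k : ℝ) + 1) ^ (-s) := by
  simpa using (summable_nat_add_iff 1).2 (Real.summable_nat_rpow.2 (by linarith : -s < -1))

lemma natAbs_natCast_add_one_rpow (n : ℕ) :
    (((n : ℤ) + 1).natAbs : ℝ) ^ (-s) = ((n : ℝ) + 1) ^ (-s) := by
  rw [show ((n : ℤ) + 1).natAbs = n + 1 by omega]
  push_cast
  rfl

lemma summable_int_natAbs_rpow_neg (hs : 1 < s) :
    Summable fun k : ℤ => (k.natAbs : ℝ) ^ (-s) := by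
  have h := summable_zetaR_terms hs
  exact .of_add_one_of_neg_add_one (by simpa only [natAbs_natCast_add_one_rpow] using h)
    (by simpa only [Int.natAbs_neg, natAbs_natCast_add_one_rpow] using h)

/-- The term `k = 0` vanishes because `0 ^ (-s) = 0`. -/
lemma tsum_int_natAbs_rpow_neg (hs : 1 < s) :
    ∑' k : ℤ, (k.natAbs : ℝ) ^ (-s) = 2 * zetaR s := by
  have h := summable_zetaR_terms hs
  rw [tsum_of_add_one_of_neg_add_one (by simpa only [natAbs_natCast_add_one_rpow] using h)
    (by simpa only [Int.natAbs_neg, natAbs_natCast_add_one_rpow] using h)]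
  simp only [Int.natAbs_neg, natAbs_natCast_add_one_rpow, Int.natAbs_zero, Nat.cast_zero,
    Real.zero_rpow (by linarith : -s ≠ 0), add_zero, zetaR]
  ring

end ZetaSeries

section KorobovWeight

variable {d : ℕ}

noncomputable def korobovWeight (γ : Finset (Fin d) → ℝ) (α : ℝ) (h : Fin d → ℤ) : ℝ :=
  (γ (univ.filter fun j => h j ≠ 0))⁻¹ *
    ∏ j ∈ univ.filter (fun j => h j ≠ 0), ((h j).natAbs : ℝ) ^ α

variable {γ : Finset (Fin d) → ℝ} {α q : ℝ}

lemma korobovWeight_pos (hγ : ∀ u, 0 < γ u) (h : Fin d → ℤ) : 0 < korobovWeight γ α h :=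
  mul_pos (inv_pos.2 (hγ _)) <| prod_pos fun _ hj =>
    Real.rpow_pos_of_pos (Nat.cast_pos.2 (Int.natAbs_pos.2 (mem_filter.1 hj).2)) α

lemma korobovWeight_rpow_neg (hγ : ∀ u, 0 ≤ γ u) (h : Fin d → ℤ) :
    korobovWeight γ α h ^ (-q) = γ (univ.filter fun j => h j ≠ 0) ^ q *
      ∏ j ∈ univ.filter (fun j => h j ≠ 0), ((h j).natAbs : ℝ) ^ (-(α * q)) :=
  inv_mul_prod_rpow_rpow_neg _ (hγ _) (a := fun j => ((h j).natAbs : ℝ))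
    (fun _ => Nat.cast_nonneg _) α q

lemma sum_korobovWeight_rpow_neg_le (hs : 1 < α * q) (hγ : ∀ u, 0 ≤ γ u)
    (T : Finset (Fin d → ℤ)) :
    ∑ h ∈ T, korobovWeight γ α h ^ (-q) ≤ ∑ u, (2 * zetaR (α * q)) ^ u.card * γ u ^ q := by
  set w : ℤ → ℝ := fun k => (k.natAbs : ℝ) ^ (-(α * q))
  calc ∑ h ∈ T, korobovWeight γ α h ^ (-q)
      = ∑ u, γ u ^ q * ∑ h ∈ T with (univ.filter fun j => h j ≠ 0) = u, ∏ j ∈ u, w (h j) := by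
        rw [← sum_fiberwise T fun h => univ.filter fun j => h j ≠ 0]
        refine sum_congr rfl fun u _ => ?_
        rw [mul_sum]
        refine sum_congr rfl fun h hh => ?_
        rw [korobovWeight_rpow_neg hγ, (mem_filter.1 hh).2]
    _ ≤ ∑ u, γ u ^ q * (2 * zetaR (α * q)) ^ u.card := by
        refine sum_le_sum fun u _ => mul_le_mul_of_nonneg_left ?_ (Real.rpow_nonneg (hγ u) q)
        rw [← tsum_int_natAbs_rpow_neg hs]
        refine sum_prod_le_tsum_pow (fun _ => Real.rpow_nonneg (Nat.cast_nonneg _) _)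
          (summable_int_natAbs_rpow_neg hs) u _ fun h hh j hj => ?_
        by_contra hne
        exact hj ((mem_filter.1 hh).2 ▸ mem_filter.2 ⟨mem_univ j, hne⟩)
    _ = ∑ u, (2 * zetaR (α * q)) ^ u.card * γ u ^ q := sum_congr rfl fun _ _ => mul_comm _ _

lemma card_le_of_forall_korobovWeight_le {M : ℝ} (hM : 0 ≤ M) (hα : 0 < α) (hs : 1 < α * q)
    (hγ : ∀ u, 0 < γ u) (T : Finset (Fin d → ℤ)) (hT : ∀ h ∈ T, korobovWeight γ α h ≤ M) :
    (T.card : ℝ) ≤ M ^ q * ∑ u, (2 * zetaR (α * q)) ^ u.card * γ u ^ q := by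
  have hq : 0 ≤ q := by nlinarith
  calc (T.card : ℝ) ≤ M ^ q * ∑ h ∈ T, korobovWeight γ α h ^ (-q) :=
        card_le_rpow_mul_sum_rpow_neg hq T fun h hh => ⟨korobovWeight_pos hγ h, hT h hh⟩
    _ ≤ _ := mul_le_mul_of_nonneg_left
        (sum_korobovWeight_rpow_neg_le hs (fun u => (hγ u).le) T) (Real.rpow_nonneg hM q)

end KorobovWeight

theorem index_set_cardinality_bound_general (d : ℕ) (α M q : ℝ)
    (hα : 1 < α) (hM : 0 < M) (hq : 1 / α < q)
    (γ : Finset (Fin d) → ℝ) (hγ : ∀ u, 0 < γ u)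
    (r : (Fin d → ℤ) → ℝ)
    (hr : ∀ h, r h = (γ (Finset.univ.filter fun j => h j ≠ 0))⁻¹ *
        ∏ j ∈ Finset.univ.filter (fun j => h j ≠ 0), ((h j).natAbs : ℝ) ^ α) :
    {h : Fin d → ℤ | r h ≤ M}.Finite ∧
    (({h : Fin d → ℤ | r h ≤ M}.ncard : ℝ)
      ≤ M ^ q * ∑ u : Finset (Fin d), (2 * zetaR (α * q)) ^ u.card * γ u ^ q) := by
  obtain rfl : r = korobovWeight γ α := funext hr
  have hα₀ : 0 < α := by linarith
  have hs : 1 < α * q := by rwa [div_lt_iff₀ hα₀, mul_comm] at hq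
  have hcard (T : Finset (Fin d → ℤ)) (hT : ↑T ⊆ {h | korobovWeight γ α h ≤ M}) :=
    card_le_of_forall_korobovWeight_le hM.le hα₀ hs hγ T fun _ hh => hT hh
  have hfin : {h | korobovWeight γ α h ≤ M}.Finite :=
    Set.finite_of_forall_finset_card_le _ fun T hT => by
      exact_mod_cast (hcard T hT).trans (Nat.le_ceil _)
  refine ⟨hfin, ?_⟩
  rw [Set.ncard_eq_toFinset_card _ hfin]
  exact hcard _ fun h hh => hfin.mem_toFinset.1 hh

/-- Cardinality bound for the index set `𝒜_d(M) = {h ∈ ℤ^d : r(h) ≤ M}`: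
for all `d ≥ 1`, `M > 0` and `q > 1/α`,
`|𝒜_d(M)| ≤ M^q ∑_{𝔲 ⊆ {1:d}} [2ζ(αq)]^{|𝔲|} γ_𝔲^q`. -/
theorem index_set_cardinality_bound (d : ℕ) (hd : 1 ≤ d) (α M q : ℝ)
    (hα : 1 < α) (hM : 0 < M) (hq : 1 / α < q)
    (γ : Finset (Fin d) → ℝ) (hγ : ∀ u, 0 < γ u) (hγe : γ ∅ = 1)
    (r : (Fin d → ℤ) → ℝ)
    (hr : ∀ h, r h = (γ (Finset.univ.filter fun j => h j ≠ 0))⁻¹ *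
        ∏ j ∈ Finset.univ.filter (fun j => h j ≠ 0), ((h j).natAbs : ℝ) ^ α) :
    {h : Fin d → ℤ | r h ≤ M}.Finite ∧
    (({h : Fin d → ℤ | r h ≤ M}.ncard : ℝ)
      ≤ M ^ q * ∑ u : Finset (Fin d), (2 * zetaR (α * q)) ^ u.card * γ u ^ q) :=
  index_set_cardinality_bound_general d α M q hα hM hq γ hγ r hr
end
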